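/- L¹ decay of frequency-localized heat kernels (key estimate in the proof of Lemma 3.5): Let n ≥ 1 and let φ : ℝⁿ → ℝ be a smooth compactly supported function whose support does not contain the origin (e.g. supp φ ⊆ {ξ : R₁ ≤ |ξ| ≤ R₂} for some 0 < R₁ < R₂). Then there exist constants c, C > 0, depending only on n and φ, such that for all t > 0 and all λ > 0, the function G_{λ,t}(x) := ∫_{ℝⁿ} e^{2πi x·ξ} φ(ξ/λ) e^{−t|ξ|²} dξ satisfies ∫_{ℝⁿ} |G_{λ,t}(x)| dx ≤ C e^{−c t λ²}. -/

import Mathlib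

/-!
Substituting `ξ = λ η` gives `G_{λ,t}(x) = λⁿ 𝓕ψ(-λ x)` with `ψ(η) = φ(η) e^{-s|η|²}` and
`s = t λ²`, so `‖G_{λ,t}‖_{L¹} = ‖𝓕ψ‖_{L¹}` for every `λ`. On `supp φ` we have `r ≤ |η| ≤ R`,
so by Leibniz every derivative of `ψ` of order `≤ N` is `O((1 + s)^N e^{-s r²}) = O(e^{-s r²/2})`,
uniformly in `η`. Integrating by parts `N` times then gives
`|𝓕ψ(w)| ≤ C e^{-s r²/2} (1 + |w|)^{-N}`, which is integrable once `N > n`.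
-/

open MeasureTheory Metric Set ENNReal

/-- The frequency-localized heat kernel
`G_{λ,t}(x) = ∫ e^{2πi x·ξ} φ(ξ/λ) e^{-t|ξ|²} dξ`. -/
noncomputable def heatLoc (n : ℕ) (φ : EuclideanSpace ℝ (Fin n) → ℝ) (lam t : ℝ)
    (x : EuclideanSpace ℝ (Fin n)) : ℂ :=
  ∫ ξ : EuclideanSpace ℝ (Fin n),
    Complex.exp (2 * Real.pi * Complex.I * ((inner ℝ x ξ : ℝ) : ℂ)) *
      (φ (lam⁻¹ • ξ) : ℂ) * Complex.exp (-((t * ‖ξ‖ ^ 2 : ℝ) : ℂ))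

open FourierTransform

lemma one_add_pow_mul_exp_neg_le (N : ℕ) {a s : ℝ} (ha : 0 < a) (hs : 0 ≤ s) :
    (1 + s) ^ N * Real.exp (-(a * s)) ≤ N.factorial * Real.exp a / a ^ N := by
  have h := Real.pow_div_factorial_le_exp (x := a * (1 + s)) (by positivity) N
  rw [div_le_iff₀ (by positivity), mul_pow, mul_one_add, Real.exp_add] at h
  rw [le_div_iff₀ (by positivity)]
  calc (1 + s) ^ N * Real.exp (-(a * s)) * a ^ N
      = (a ^ N * (1 + s) ^ N) * Real.exp (-(a * s)) := by ring
    _ ≤ Real.exp a * Real.exp (a * s) * N.factorial * Real.exp (-(a * s)) := by gcongr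
    _ = N.factorial * Real.exp a := by rw [Real.exp_neg]; field_simp

section

variable {𝕜 E F : Type*} [NontriviallyNormedField 𝕜] [NormedAddCommGroup E] [NormedSpace 𝕜 E]
  [NormedAddCommGroup F] [NormedSpace 𝕜 F]

lemma ContinuousLinearMap.norm_iteratedFDeriv_coe_le (L : E →L[𝕜] F) (j : ℕ) (x : E) :
    ‖iteratedFDeriv 𝕜 j L x‖ ≤ ‖L‖ * (‖x‖ + 1) := by
  match j with
  | 0 => simpa using L.le_opNorm x |>.trans (by nlinarith [norm_nonneg L, norm_nonneg x])
  | 1 => simp only [norm_iteratedFDeriv_one, L.fderiv]; nlinarith [norm_nonneg L, norm_nonneg x]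
  | j + 2 =>
    rw [← norm_iteratedFDeriv_fderiv, funext fun y => L.fderiv (x := y),
      iteratedFDeriv_succ_const]
    simp only [Pi.zero_apply, norm_zero]; positivity

lemma ContDiff.exists_norm_iteratedFDeriv_le_of_hasCompactSupport {f : E → F} {N : ℕ}
    (hf : ContDiff 𝕜 N f) (hfc : HasCompactSupport f) :
    ∃ M, ∀ i ≤ N, ∀ x, ‖iteratedFDeriv 𝕜 i f x‖ ≤ M := by
  have hbdd : ∀ i ≤ N, ∃ B, ∀ x, ‖iteratedFDeriv 𝕜 i f x‖ ≤ B := fun i hi =>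
    (hf.continuous_iteratedFDeriv (by exact_mod_cast hi)).bounded_above_of_compact_support
      (hfc.iteratedFDeriv i)
  choose! B hB using hbdd
  obtain ⟨M, hM⟩ := ((finite_Iic N).image B).bddAbove
  exact ⟨M, fun i hi x => (hB i hi x).trans (hM (mem_image_of_mem B hi))⟩

end

variable {E : Type*} [NormedAddCommGroup E] [InnerProductSpace ℝ E]

lemma fderiv_neg_mul_norm_sq (s : ℝ) :
    fderiv ℝ (fun y : E => -(s * ‖y‖ ^ 2)) = ⇑((-(2 * s)) • innerSL ℝ : E →L[ℝ] E →L[ℝ] ℝ) := by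
  ext y v
  have h : HasFDerivAt (fun y : E => -(s * ‖y‖ ^ 2)) (-(s • 2 • innerSL ℝ y)) y :=
    ((hasStrictFDerivAt_norm_sq y).hasFDerivAt.const_mul s).neg
  rw [h.fderiv]
  simp only [neg_apply, smul_apply, coe_innerSL_apply, nsmul_eq_mul, Nat.cast_ofNat, smul_eq_mul]
  ring

lemma norm_smul_innerSL_le (a : ℝ) : ‖(a • innerSL ℝ : E →L[ℝ] E →L[ℝ] ℝ)‖ ≤ |a| := by
  refine (ContinuousLinearMap.opNorm_smul_le a (innerSL ℝ : E →L[ℝ] E →L[ℝ] ℝ)).trans ?_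
  rw [Real.norm_eq_abs]
  exact mul_le_of_le_one_right (abs_nonneg a) (norm_innerSL_le ℝ)

lemma norm_iteratedFDeriv_exp_neg_mul_norm_sq_le {s : ℝ} (hs : 0 ≤ s) (m : ℕ) (η : E) :
    ‖iteratedFDeriv ℝ m (fun y : E => Real.exp (-(s * ‖y‖ ^ 2))) η‖ ≤
      m.factorial * Real.exp (-(s * ‖η‖ ^ 2)) * (1 + 2 * s * (‖η‖ + 1)) ^ m := by
  have hq : ContDiff ℝ m (fun y : E => -(s * ‖y‖ ^ 2)) :=
    (contDiff_const.mul (contDiff_norm_sq ℝ)).neg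
  refine norm_iteratedFDeriv_comp_le (g := Real.exp) Real.contDiff_exp hq le_rfl η ?_ ?_
  · intro i _
    rw [norm_iteratedFDeriv_eq_norm_iteratedDeriv, iteratedDeriv_eq_iterate, Real.iter_deriv_exp,
      Real.norm_of_nonneg (Real.exp_pos _).le]
  · rintro (_ | i) hi -
    · omega
    rw [← norm_iteratedFDeriv_fderiv, fderiv_neg_mul_norm_sq]
    have hL := norm_smul_innerSL_le (E := E) (-(2 * s))
    rw [abs_neg, abs_of_nonneg (by positivity)] at hL
    calc _ ≤ 2 * s * (‖η‖ + 1) := (ContinuousLinearMap.norm_iteratedFDeriv_coe_le _ i η).trans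
            (by gcongr)
      _ ≤ 1 + 2 * s * (‖η‖ + 1) := by linarith
      _ ≤ (1 + 2 * s * (‖η‖ + 1)) ^ (i + 1) :=
          le_self_pow₀ (by nlinarith [norm_nonneg η]) (by omega)

noncomputable def gaussianDamped (φ : E → ℝ) (s : ℝ) (η : E) : ℝ :=
  φ η * Real.exp (-(s * ‖η‖ ^ 2))

lemma contDiff_exp_neg_mul_norm_sq {n : WithTop ℕ∞} (s : ℝ) :
    ContDiff ℝ n (fun y : E => Real.exp (-(s * ‖y‖ ^ 2))) :=
  Real.contDiff_exp.comp (contDiff_const.mul (contDiff_norm_sq ℝ)).neg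

lemma ContDiff.gaussianDamped {φ : E → ℝ} {n : WithTop ℕ∞} (hφ : ContDiff ℝ n φ) (s : ℝ) :
    ContDiff ℝ n (gaussianDamped φ s) :=
  hφ.mul (contDiff_exp_neg_mul_norm_sq s)

lemma iteratedFDeriv_gaussianDamped_eq_zero {φ : E → ℝ} {η : E} (hη : η ∉ tsupport φ) (s : ℝ)
    (j : ℕ) : iteratedFDeriv ℝ j (gaussianDamped φ s) η = 0 :=
  image_eq_zero_of_notMem_tsupport fun h =>
    hη (tsupport_mul_subset_left (tsupport_iteratedFDeriv_subset j h))

lemma norm_iteratedFDeriv_gaussianDamped_le {φ : E → ℝ} {N : ℕ} (hφ : ContDiff ℝ N φ)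
    {M R s : ℝ} {η : E} (hM : ∀ i ≤ N, ‖iteratedFDeriv ℝ i φ η‖ ≤ M) (hη : ‖η‖ ≤ R)
    (hs : 0 ≤ s) {j : ℕ} (hj : j ≤ N) :
    ‖iteratedFDeriv ℝ j (gaussianDamped φ s) η‖ ≤
      2 ^ N * M * (N.factorial * ((3 + 2 * R) * (1 + s)) ^ N * Real.exp (-(s * ‖η‖ ^ 2))) := by
  set X := (3 + 2 * R) * (1 + s)
  have hM0 : 0 ≤ M := (norm_nonneg _).trans (hM 0 (Nat.zero_le _))
  have hX : 1 ≤ X := by nlinarith [norm_nonneg η]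
  have hgauss : ∀ k ≤ N, ‖iteratedFDeriv ℝ k (fun y : E => Real.exp (-(s * ‖y‖ ^ 2))) η‖ ≤
      N.factorial * X ^ N * Real.exp (-(s * ‖η‖ ^ 2)) := by
    intro k hk
    have hbase : 1 + 2 * s * (‖η‖ + 1) ≤ X := by nlinarith [norm_nonneg η]
    refine (norm_iteratedFDeriv_exp_neg_mul_norm_sq_le hs k η).trans ?_
    rw [mul_right_comm]
    gcongr
    exact (pow_le_pow_left₀ (by positivity) hbase k).trans (pow_le_pow_right₀ hX hk)
  have hB : 0 ≤ N.factorial * X ^ N * Real.exp (-(s * ‖η‖ ^ 2)) := by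
    have := zero_le_one.trans hX
    positivity
  refine (norm_iteratedFDeriv_mul_le hφ (contDiff_exp_neg_mul_norm_sq s) η
    (by exact_mod_cast hj)).trans ?_
  calc ∑ i ∈ Finset.range (j + 1), (j.choose i : ℝ) * ‖iteratedFDeriv ℝ i φ η‖ *
        ‖iteratedFDeriv ℝ (j - i) (fun y : E => Real.exp (-(s * ‖y‖ ^ 2))) η‖
      ≤ ∑ i ∈ Finset.range (j + 1), (j.choose i : ℝ) * M *
          (N.factorial * X ^ N * Real.exp (-(s * ‖η‖ ^ 2))) := by
        gcongr with i hi
        · exact hM i (by simp at hi; omega)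
        · exact hgauss _ (by omega)
    _ = 2 ^ j * M * (N.factorial * X ^ N * Real.exp (-(s * ‖η‖ ^ 2))) := by
        rw [← Finset.sum_mul, ← Finset.sum_mul, ← Nat.cast_sum, Nat.sum_range_choose]
        push_cast; ring
    _ ≤ 2 ^ N * M * (N.factorial * X ^ N * Real.exp (-(s * ‖η‖ ^ 2))) := by
        gcongr
        norm_num

lemma exists_norm_iteratedFDeriv_gaussianDamped_le {φ : E → ℝ} {N : ℕ} (hφ : ContDiff ℝ N φ)
    (hφc : HasCompactSupport φ) (hφ0 : (0 : E) ∉ tsupport φ) :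
    ∃ c C : ℝ, 0 < c ∧ ∀ s, 0 ≤ s → ∀ j ≤ N, ∀ η ∈ tsupport φ,
      ‖iteratedFDeriv ℝ j (gaussianDamped φ s) η‖ ≤ C * Real.exp (-(c * s)) := by
  obtain ⟨r, hr, hball⟩ :=
    Metric.mem_nhds_iff.1 ((isClosed_tsupport φ).isOpen_compl.mem_nhds hφ0)
  obtain ⟨R, hR, hRφ⟩ := hφc.isCompact.isBounded.exists_pos_norm_le
  obtain ⟨M, hM⟩ := hφ.exists_norm_iteratedFDeriv_le_of_hasCompactSupport hφc
  have hM0 : 0 ≤ M := (norm_nonneg _).trans (hM 0 (Nat.zero_le _) 0)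
  -- Half of the decay `exp (-s r²)` on `tsupport φ` absorbs the polynomial growth `(1 + s) ^ N`.
  set c := r ^ 2 / 2 with hc_def
  have hc : 0 < c := by positivity
  set P := N.factorial * Real.exp c / c ^ N
  refine ⟨c, 2 ^ N * M * (N.factorial * (3 + 2 * R) ^ N * P), hc, fun s hs j hj η hη => ?_⟩
  have hrη : r ≤ ‖η‖ := not_lt.1 fun h => hball (mem_ball_zero_iff.2 h) hη
  have hexp : Real.exp (-(s * ‖η‖ ^ 2)) ≤ Real.exp (-(c * s)) * Real.exp (-(c * s)) := by
    rw [← Real.exp_add]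
    gcongr
    nlinarith [mul_le_mul_of_nonneg_left (pow_le_pow_left₀ hr.le hrη 2) hs]
  refine (norm_iteratedFDeriv_gaussianDamped_le hφ (fun i hi => hM i hi η) (hRφ η hη) hs
    hj).trans ?_
  calc 2 ^ N * M * (N.factorial * ((3 + 2 * R) * (1 + s)) ^ N * Real.exp (-(s * ‖η‖ ^ 2)))
      = 2 ^ N * M * (N.factorial * (3 + 2 * R) ^ N) *
          ((1 + s) ^ N * Real.exp (-(s * ‖η‖ ^ 2))) := by rw [mul_pow]; ring
    _ ≤ 2 ^ N * M * (N.factorial * (3 + 2 * R) ^ N) *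
          ((1 + s) ^ N * Real.exp (-(c * s)) * Real.exp (-(c * s))) := by
        rw [mul_assoc ((1 + s) ^ N)]; gcongr
    _ ≤ 2 ^ N * M * (N.factorial * (3 + 2 * R) ^ N) * (P * Real.exp (-(c * s))) := by
        gcongr; exact one_add_pow_mul_exp_neg_le N hc hs
    _ = _ := by ring

variable {V : Type*} [NormedAddCommGroup V] [InnerProductSpace ℝ V] [FiniteDimensional ℝ V]
  [MeasurableSpace V] [BorelSpace V]

lemma pow_mul_norm_fourier_le_of_hasCompactSupport {f : V → ℂ} {N : ℕ} (hf : ContDiff ℝ N f)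
    (hfc : HasCompactSupport f) {B : ℝ} (hB : ∀ j ≤ N, ∫ v, ‖iteratedFDeriv ℝ j f v‖ ≤ B)
    {m : ℕ} (hm : m ≤ N) (w : V) :
    ‖w‖ ^ m * ‖𝓕 f w‖ ≤ 2 ^ m * ((m + 1) * B) := by
  have hint : ∀ k j : ℕ, (k : ℕ∞) ≤ 0 → (j : ℕ∞) ≤ N →
      Integrable (fun v ↦ ‖v‖ ^ k * ‖iteratedFDeriv ℝ j f v‖) := fun k j _ hj =>
    ((continuous_norm.pow k).mul (hf.continuous_iteratedFDeriv (by exact_mod_cast hj)).norm)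
      |>.integrable_of_hasCompactSupport (hfc.iteratedFDeriv j).norm.mul_left
  have h := Real.pow_mul_norm_iteratedFDeriv_fourier_le hf hint le_rfl
    (by exact_mod_cast hm) w (k := 0)
  simp only [norm_iteratedFDeriv_zero, pow_zero, one_mul, CharP.cast_eq_zero, mul_zero,
    zero_add] at h
  refine h.trans (mul_le_mul_of_nonneg_left ?_ (by positivity))
  calc ∑ p ∈ Finset.range 1 ×ˢ Finset.range (m + 1), ∫ v, ‖v‖ ^ p.1 * ‖iteratedFDeriv ℝ p.2 f v‖
      ≤ ∑ p ∈ Finset.range 1 ×ˢ Finset.range (m + 1), B := by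
        refine Finset.sum_le_sum fun p hp => ?_
        simp only [Finset.mem_product, Finset.mem_range, Nat.lt_one_iff] at hp
        simpa [hp.1] using hB p.2 (by omega)
    _ = (m + 1) * B := by simp

lemma one_add_norm_pow_mul_norm_fourier_le_of_hasCompactSupport {f : V → ℂ} {N : ℕ}
    (hf : ContDiff ℝ N f) (hfc : HasCompactSupport f) {B : ℝ}
    (hB : ∀ j ≤ N, ∫ v, ‖iteratedFDeriv ℝ j f v‖ ≤ B) (w : V) :
    (1 + ‖w‖) ^ N * ‖𝓕 f w‖ ≤ 4 ^ N * ((N + 2) * B) := by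
  have hB0 : 0 ≤ B := (integral_nonneg fun v => norm_nonneg _).trans (hB 0 (Nat.zero_le _))
  have h0 := pow_mul_norm_fourier_le_of_hasCompactSupport hf hfc hB (Nat.zero_le N) w
  simp only [pow_zero, one_mul, CharP.cast_eq_zero, zero_add] at h0
  have hN := pow_mul_norm_fourier_le_of_hasCompactSupport hf hfc hB le_rfl w
  have h2N : B ≤ 2 ^ N * B := le_mul_of_one_le_left hB0 (one_le_pow₀ one_le_two)
  calc (1 + ‖w‖) ^ N * ‖𝓕 f w‖ ≤ 2 ^ (N - 1) * (1 ^ N + ‖w‖ ^ N) * ‖𝓕 f w‖ := by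
        gcongr; exact add_pow_le zero_le_one (norm_nonneg w) N
    _ = 2 ^ (N - 1) * (‖𝓕 f w‖ + ‖w‖ ^ N * ‖𝓕 f w‖) := by ring
    _ ≤ 2 ^ N * (B + 2 ^ N * ((N + 1) * B)) :=
        mul_le_mul (pow_le_pow_right₀ one_le_two (Nat.sub_le N 1)) (add_le_add h0 hN)
          (by positivity) (by positivity)
    _ ≤ 4 ^ N * ((N + 2) * B) := by
        rw [show (4 : ℝ) ^ N = 2 ^ N * 2 ^ N by rw [← mul_pow]; norm_num]
        nlinarith [pow_pos (two_pos (α := ℝ)) N]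

lemma exists_integral_norm_iteratedFDeriv_gaussianDamped_le {φ : V → ℝ} {N : ℕ}
    (hφ : ContDiff ℝ N φ) (hφc : HasCompactSupport φ) (hφ0 : (0 : V) ∉ tsupport φ) :
    ∃ c C : ℝ, 0 < c ∧ ∀ s, 0 ≤ s → ∀ j ≤ N,
      ∫ v, ‖iteratedFDeriv ℝ j (fun η => (gaussianDamped φ s η : ℂ)) v‖ ≤
        C * Real.exp (-(c * s)) := by
  obtain ⟨c, C, hc, hC⟩ := exists_norm_iteratedFDeriv_gaussianDamped_le hφ hφc hφ0
  refine ⟨c, C * volume.real (tsupport φ), hc, fun s hs j hj => ?_⟩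
  have hnorm : ∀ v, ‖iteratedFDeriv ℝ j (fun η => (gaussianDamped φ s η : ℂ)) v‖ =
      ‖iteratedFDeriv ℝ j (gaussianDamped φ s) v‖ := fun v =>
    Complex.ofRealLI.norm_iteratedFDeriv_comp_left ((hφ.gaussianDamped s).contDiffAt)
      (by exact_mod_cast hj)
  simp_rw [hnorm]
  rw [← setIntegral_eq_integral_of_forall_compl_eq_zero fun v hv => by
    rw [iteratedFDeriv_gaussianDamped_eq_zero hv, norm_zero]]
  calc ∫ v in tsupport φ, ‖iteratedFDeriv ℝ j (gaussianDamped φ s) v‖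
      ≤ ‖∫ v in tsupport φ, ‖iteratedFDeriv ℝ j (gaussianDamped φ s) v‖‖ := Real.le_norm_self _
    _ ≤ C * Real.exp (-(c * s)) * volume.real (tsupport φ) :=
        norm_setIntegral_le_of_norm_le_const hφc.measure_lt_top fun v hv => by
          rw [norm_norm]; exact hC s hs j hj v hv
    _ = _ := by ring

lemma exists_one_add_norm_pow_mul_norm_fourier_gaussianDamped_le {φ : V → ℝ} {N : ℕ}
    (hφ : ContDiff ℝ N φ) (hφc : HasCompactSupport φ) (hφ0 : (0 : V) ∉ tsupport φ) :
    ∃ c C : ℝ, 0 < c ∧ ∀ s, 0 ≤ s → ∀ w,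
      (1 + ‖w‖) ^ N * ‖𝓕 (fun η => (gaussianDamped φ s η : ℂ)) w‖ ≤ C * Real.exp (-(c * s)) := by
  obtain ⟨c, C, hc, hC⟩ := exists_integral_norm_iteratedFDeriv_gaussianDamped_le hφ hφc hφ0
  refine ⟨c, 4 ^ N * ((N + 2) * C), hc, fun s hs w => ?_⟩
  have hsmooth : ContDiff ℝ N (fun η => (gaussianDamped φ s η : ℂ)) :=
    Complex.ofRealCLM.contDiff.comp (hφ.gaussianDamped s)
  have hsupp : HasCompactSupport (fun η => (gaussianDamped φ s η : ℂ)) :=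
    hφc.mul_right.comp_left Complex.ofReal_zero
  calc _ ≤ 4 ^ N * ((N + 2) * (C * Real.exp (-(c * s)))) :=
        one_add_norm_pow_mul_norm_fourier_le_of_hasCompactSupport hsmooth hsupp (hC s hs) w
    _ = _ := by ring

lemma exists_lintegral_enorm_fourier_gaussianDamped_le {φ : V → ℝ} {N : ℕ}
    (hN : Module.finrank ℝ V < N) (hφ : ContDiff ℝ N φ) (hφc : HasCompactSupport φ)
    (hφ0 : (0 : V) ∉ tsupport φ) :
    ∃ c C : ℝ, 0 < c ∧ 0 < C ∧ ∀ s, 0 ≤ s →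
      ∫⁻ w, ‖𝓕 (fun η => (gaussianDamped φ s η : ℂ)) w‖ₑ ≤
        ENNReal.ofReal (C * Real.exp (-(c * s))) := by
  obtain ⟨c, C, hc, hC⟩ :=
    exists_one_add_norm_pow_mul_norm_fourier_gaussianDamped_le hφ hφc hφ0
  set I := ∫⁻ w : V, ENNReal.ofReal ((1 + ‖w‖) ^ (-(N : ℝ)))
  have hI : I ≠ ∞ := (finite_integral_one_add_norm (by exact_mod_cast hN)).ne
  refine ⟨c, max C 1 * (I.toReal + 1), hc, by positivity, fun s hs => ?_⟩
  have hpoint : ∀ w, ‖𝓕 (fun η => (gaussianDamped φ s η : ℂ)) w‖ ≤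
      max C 1 * Real.exp (-(c * s)) * (1 + ‖w‖) ^ (-(N : ℝ)) := fun w => by
    rw [Real.rpow_neg (by positivity), Real.rpow_natCast, ← div_eq_mul_inv,
      le_div_iff₀ (by positivity), mul_comm]
    exact (hC s hs w).trans (by gcongr; exact le_max_left C 1)
  calc ∫⁻ w, ‖𝓕 (fun η => (gaussianDamped φ s η : ℂ)) w‖ₑ
      ≤ ∫⁻ w, ENNReal.ofReal (max C 1 * Real.exp (-(c * s))) *
          ENNReal.ofReal ((1 + ‖w‖) ^ (-(N : ℝ))) := by
        refine lintegral_mono fun w => ?_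
        rw [← ENNReal.ofReal_mul (by positivity), ← ofReal_norm]
        exact ENNReal.ofReal_le_ofReal (hpoint w)
    _ = ENNReal.ofReal (max C 1 * Real.exp (-(c * s))) * ENNReal.ofReal I.toReal := by
        rw [lintegral_const_mul' _ _ ENNReal.ofReal_ne_top, ENNReal.ofReal_toReal hI]
    _ ≤ ENNReal.ofReal (max C 1 * (I.toReal + 1) * Real.exp (-(c * s))) := by
        rw [← ENNReal.ofReal_mul (by positivity)]
        refine ENNReal.ofReal_le_ofReal ?_
        calc max C 1 * Real.exp (-(c * s)) * I.toReal
            ≤ max C 1 * Real.exp (-(c * s)) * (I.toReal + 1) := by gcongr; linarith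
          _ = _ := by ring

lemma lintegral_comp_smul {F : Type*} [NormedAddCommGroup F] [NormedSpace ℝ F]
    [MeasurableSpace F] [BorelSpace F] [FiniteDimensional ℝ F] (μ : Measure F)
    [μ.IsAddHaarMeasure] (f : F → ℝ≥0∞) {R : ℝ} (hR : R ≠ 0) :
    ∫⁻ x, f (R • x) ∂μ = ENNReal.ofReal |(R ^ Module.finrank ℝ F)⁻¹| * ∫⁻ x, f x ∂μ := by
  rw [← smul_eq_mul, ← lintegral_smul_measure, ← Measure.map_addHaar_smul μ hR]
  exact (lintegral_map_equiv f (Homeomorph.smul (Units.mk0 R hR)).toMeasurableEquiv).symm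

lemma heatLoc_eq_smul_fourier_gaussianDamped (n : ℕ) (φ : EuclideanSpace ℝ (Fin n) → ℝ)
    {lam : ℝ} (hlam : 0 < lam) (t : ℝ) (x : EuclideanSpace ℝ (Fin n)) :
    heatLoc n φ lam t x =
      (lam ^ n : ℝ) • 𝓕 (fun η => (gaussianDamped φ (t * lam ^ 2) η : ℂ)) ((-lam) • x) := by
  have h := Measure.integral_comp_inv_smul_of_nonneg volume
    (fun η => Complex.exp (2 * Real.pi * Complex.I * ((inner ℝ x (lam • η) : ℝ) : ℂ)) *
      (φ (lam⁻¹ • lam • η) : ℂ) * Complex.exp (-((t * ‖lam • η‖ ^ 2 : ℝ) : ℂ))) hlam.le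
  simp only [smul_inv_smul₀ hlam.ne', finrank_euclideanSpace_fin] at h
  rw [heatLoc, h, Real.fourier_eq']
  congr 1
  refine integral_congr_ae (ae_of_all _ fun η => ?_)
  simp only [inv_smul_smul₀ hlam.ne', norm_smul, inner_smul_right, real_inner_comm x η,
    gaussianDamped, smul_eq_mul, Real.norm_eq_abs, abs_of_pos hlam]
  push_cast
  ring_nf

lemma lintegral_nnnorm_heatLoc_eq (n : ℕ) (φ : EuclideanSpace ℝ (Fin n) → ℝ) {lam : ℝ}
    (hlam : 0 < lam) (t : ℝ) :
    ∫⁻ x, (‖heatLoc n φ lam t x‖₊ : ℝ≥0∞) =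
      ∫⁻ w, ‖𝓕 (fun η => (gaussianDamped φ (t * lam ^ 2) η : ℂ)) w‖ₑ := by
  simp_rw [heatLoc_eq_smul_fourier_gaussianDamped n φ hlam t, nnnorm_smul, ENNReal.coe_mul,
    ← enorm_eq_nnnorm]
  rw [lintegral_const_mul' _ _ enorm_ne_top,
    lintegral_comp_smul volume (fun w => ‖𝓕 (fun η => (gaussianDamped φ (t * lam ^ 2) η : ℂ)) w‖ₑ)
      (neg_ne_zero.2 hlam.ne'), finrank_euclideanSpace_fin, ← mul_assoc, ← ofReal_norm,
    ← ENNReal.ofReal_mul (norm_nonneg _), Real.norm_eq_abs, abs_inv, abs_pow, abs_pow, abs_neg,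
    mul_inv_cancel₀ (by positivity), ENNReal.ofReal_one, one_mul]

theorem heat_localized_L1_general (n : ℕ) (φ : EuclideanSpace ℝ (Fin n) → ℝ)
    (hφ : ∀ k : ℕ, ContDiff ℝ k φ) (hφc : HasCompactSupport φ)
    (hφ0 : (0 : EuclideanSpace ℝ (Fin n)) ∉ tsupport φ) :
    ∃ c C : ℝ, 0 < c ∧ 0 < C ∧ ∀ t lam : ℝ, 0 < t → 0 < lam →
      (∫⁻ x, (‖heatLoc n φ lam t x‖₊ : ℝ≥0∞)) ≤
        ENNReal.ofReal (C * Real.exp (-c * t * lam ^ 2)) := by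
  obtain ⟨c, C, hc, hC, hdecay⟩ :=
    exists_lintegral_enorm_fourier_gaussianDamped_le (by simp) (hφ (n + 1)) hφc hφ0
  refine ⟨c, C, hc, hC, fun t lam ht hlam => ?_⟩
  rw [lintegral_nnnorm_heatLoc_eq n φ hlam t]
  convert hdecay (t * lam ^ 2) (by positivity) using 4
  ring

/-- L¹ decay of frequency-localized heat kernels (key estimate in the proof of Lemma 3.5). -/
theorem heat_localized_L1 (n : ℕ) (hn : 1 ≤ n) (φ : EuclideanSpace ℝ (Fin n) → ℝ)
    (hφ : ∀ k : ℕ, ContDiff ℝ k φ) (hφc : HasCompactSupport φ)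
    (hφ0 : (0 : EuclideanSpace ℝ (Fin n)) ∉ tsupport φ) :
    ∃ c C : ℝ, 0 < c ∧ 0 < C ∧ ∀ t lam : ℝ, 0 < t → 0 < lam →
      (∫⁻ x, (‖heatLoc n φ lam t x‖₊ : ℝ≥0∞)) ≤
        ENNReal.ofReal (C * Real.exp (-c * t * lam ^ 2)) :=
  heat_localized_L1_general n φ hφ hφc hφ0
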